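/- Soundness of the generic bisimulation game: for all x, y ∈ {o,b}, the relation ≡_{E(x,y)} = {(s,t) | Duplicator wins the configuration ⟨(s,t),†,†,*⟩_S of the E(x,y)-generic bisimulation game} is an (x,y)-generic bisimulation. -/

import Mathlib

namespace GamesBisim

/-- Parameter values `o` (ordinary) and `b` (branching) for generic bisimulations. -/
inductive XY | o | b
deriving DecidableEq

/-- The faces ☹ (frown) and ☺ (smile). -/
inductive Face | frown | smile
deriving DecidableEq

/-- Rewards: `*` (star) and `✓` (check). -/
inductive Rw | star | check
deriving DecidableEq

/-- A labelled transition system with states `S`, actions `A` containing a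
distinguished silent action `tau`, and a transition relation. -/
structure LTS (S : Type u) (A : Type v) where
  tau : A
  Trans : S → A → S → Prop

namespace LTS

variable {S : Type u} {A : Type v}

/-- A single silent (τ) step. -/
def TauStep (L : LTS S A) (s s' : S) : Prop := L.Trans s L.tau s'

/-- `↠`: the reflexive-transitive closure of the τ-step relation. -/
def TauStar (L : LTS S A) : S → S → Prop := Relation.ReflTransGen L.TauStep

/-- `↠⁺`: the transitive closure of the τ-step relation. -/
def TauPlus (L : LTS S A) : S → S → Prop := Relation.TransGen L.TauStep

/-- An LTS is non-divergent if it admits no infinite sequence of τ-steps. -/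
def NonDivergent (L : LTS S A) : Prop :=
  ¬ ∃ f : ℕ → S, ∀ i, L.TauStep (f i) (f (i + 1))

/-- A symmetric relation `R` is a branching bisimulation. -/
def IsBranchingBisim (L : LTS S A) (R : S → S → Prop) : Prop :=
  (∀ s t, R s t → R t s) ∧
  ∀ s t a s', R s t → L.Trans s a s' →
    (a = L.tau ∧ R s' t) ∨
    ∃ t1 t', L.TauStar t t1 ∧ L.Trans t1 a t' ∧ R s t1 ∧ R s' t'

/-- Branching bisimilarity `≈b`. -/
def BranchingBisimilar (L : LTS S A) (s t : S) : Prop :=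
  ∃ R, L.IsBranchingBisim R ∧ R s t

/-- A symmetric relation `R` is a delay bisimulation. -/
def IsDelayBisim (L : LTS S A) (R : S → S → Prop) : Prop :=
  (∀ s t, R s t → R t s) ∧
  ∀ s t a s', R s t → L.Trans s a s' →
    (a = L.tau ∧ R s' t) ∨
    ∃ t1 t', L.TauStar t t1 ∧ L.Trans t1 a t' ∧ R s' t'

/-- The generalised weak transition `s ↠_{x,R,t} s'`: a weak transition `s ↠ s'`,
which in case `x = b` additionally satisfies `t R s` and `t R s'`. -/
def GenTauStar (L : LTS S A) (x : XY) (R : S → S → Prop) (t : S) (s s' : S) : Prop :=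
  L.TauStar s s' ∧ (x = XY.b → R t s ∧ R t s')

/-- The strong generalised weak transition `s ⟹_{x,R,t} s'`: a weak transition
`s ↠ s'`, which in case `x = b` is witnessed by a finite τ-path all of whose states
are related to `t` by `R`. -/
def SGenTauStar (L : LTS S A) (x : XY) (R : S → S → Prop) (t : S) (s s' : S) : Prop :=
  L.TauStar s s' ∧
  (x = XY.b → R t s ∧ Relation.ReflTransGen (fun u u' => L.TauStep u u' ∧ R t u') s s')

/-- A symmetric relation `R` is an `(x,y)`-generic bisimulation. -/
def IsGenBisim (L : LTS S A) (x y : XY) (R : S → S → Prop) : Prop :=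
  (∀ s t, R s t → R t s) ∧
  ∀ s t a s', R s t → L.Trans s a s' →
    (a = L.tau ∧ R s' t) ∨
    ∃ t1 t2 t', L.GenTauStar x R s t t1 ∧ L.Trans t1 a t2 ∧
      L.GenTauStar y R s' t2 t' ∧ R s' t'

/-- `(x,y)`-generic bisimilarity `≈_{(x,y)}`. -/
def GenBisimilar (L : LTS S A) (x y : XY) (s t : S) : Prop :=
  ∃ R, L.IsGenBisim x y R ∧ R s t

/-- A symmetric relation `R` is an `(x,y)`-generic bisimulation with explicit
divergence (divergence condition D₄). -/
def IsGenBisimED (L : LTS S A) (x y : XY) (R : S → S → Prop) : Prop :=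
  L.IsGenBisim x y R ∧
  ∀ s t, R s t → ∀ f : ℕ → S, f 0 = s → (∀ i, L.TauStep (f i) (f (i + 1))) →
    ∃ t' k, L.TauPlus t t' ∧ R (f k) t'

/-- `(x,y)`-generic bisimilarity with explicit divergence `≈ed_{(x,y)}`. -/
def GenBisimilarED (L : LTS S A) (x y : XY) (s t : S) : Prop :=
  ∃ R, L.IsGenBisimED x y R ∧ R s t

end LTS

/-- A relation `R` has the stuttering property: whenever
`t₀ →τ t₁ →τ ⋯ →τ t_k` and `t₀ R t_k`, then `t_i R t_j` for all `0 ≤ i,j ≤ k`. -/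
def StutteringProperty {S : Type u} {A : Type v} (L : LTS S A) (R : S → S → Prop) : Prop :=
  ∀ (k : ℕ) (t : ℕ → S),
    (∀ i < k, L.TauStep (t i) (t (i + 1))) → R (t 0) (t k) →
    ∀ i j, i ≤ k → j ≤ k → R (t i) (t j)

/-! ## Two-player games

A play is a maximal (finite or infinite) sequence of configurations connected by
moves, represented as `π : ℕ → Option C` which is `none` from the point (if any)
where the play has ended; a play may only end in a configuration whose owner is
stuck. A strategy for a player is a (positional) function `σ : C → C` which is
required to pick a legal move at every configuration owned by that player admitting
at least one move; a play is consistent with `σ` if every move taken from a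
configuration owned by that player follows `σ`. -/

section Games

variable {C : Type u}

/-- `π` is a maximal play of the game with move relation `move`. -/
def IsPlay (move : C → C → Prop) (π : ℕ → Option C) : Prop :=
  (∀ i c d, π i = some c → π (i + 1) = some d → move c d) ∧
  (∀ i c, π i = some c → π (i + 1) = none → ∀ d, ¬ move c d) ∧
  (∀ i, π i = none → π (i + 1) = none)

/-- The play `π` is consistent with strategy `σ` of the player owning the
configurations satisfying `owned`. -/
def ConsistentWith (owned : C → Prop) (σ : C → C) (π : ℕ → Option C) : Prop :=
  ∀ i c d, π i = some c → owned c → π (i + 1) = some d → d = σ c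

/-- `σ` is a valid strategy for the player owning the configurations satisfying
`owned`: it picks a legal move wherever a move exists. -/
def ValidStrategy (owned : C → Prop) (move : C → C → Prop) (σ : C → C) : Prop :=
  ∀ c, owned c → (∃ d, move c d) → move c (σ c)

/-- The play `π` is finite and ends in the configuration `c`. -/
def EndsAt (π : ℕ → Option C) (c : C) : Prop := ∃ i, π i = some c ∧ π (i + 1) = none

/-- The play `π` is infinite. -/
def InfinitePlay (π : ℕ → Option C) : Prop := ∀ i, π i ≠ none

/-- The Büchi winning condition on infinite plays: the play passes through
infinitely many configurations carrying a `✓` reward. -/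
def BuchiWin (reward : C → Prop) (π : ℕ → Option C) : Prop :=
  ∀ n, ∃ i, n ≤ i ∧ ∃ c, π i = some c ∧ reward c

/-- Duplicator wins the play `π`: either the play is finite and Spoiler is stuck,
or the play is infinite and satisfies the winning condition `infWin`. -/
def DupWinsPlay (dupOwned : C → Prop) (infWin : (ℕ → Option C) → Prop)
    (π : ℕ → Option C) : Prop :=
  (∃ c, EndsAt π c ∧ ¬ dupOwned c) ∨ (InfinitePlay π ∧ infWin π)

/-- Spoiler wins the play `π` (all plays not won by Duplicator). -/
def SpWinsPlay (dupOwned : C → Prop) (infWin : (ℕ → Option C) → Prop)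
    (π : ℕ → Option C) : Prop :=
  (∃ c, EndsAt π c ∧ dupOwned c) ∨ (InfinitePlay π ∧ ¬ infWin π)

/-- Duplicator wins the configuration `c`: she has a strategy winning all plays
starting in `c`. -/
def DupWins (dupOwned : C → Prop) (move : C → C → Prop)
    (infWin : (ℕ → Option C) → Prop) (c : C) : Prop :=
  ∃ σ : C → C, ValidStrategy dupOwned move σ ∧
    ∀ π, IsPlay move π → π 0 = some c → ConsistentWith dupOwned σ π →
      DupWinsPlay dupOwned infWin π

/-- Spoiler wins the configuration `c`: he has a strategy winning all plays
starting in `c`. -/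
def SpWins (dupOwned : C → Prop) (move : C → C → Prop)
    (infWin : (ℕ → Option C) → Prop) (c : C) : Prop :=
  ∃ σ : C → C, ValidStrategy (fun d => ¬ dupOwned d) move σ ∧
    ∀ π, IsPlay move π → π 0 = some c → ConsistentWith (fun d => ¬ dupOwned d) σ π →
      SpWinsPlay dupOwned infWin π

end Games

/-! ## The limited branching bisimulation (lbb) game -/

/-- Configurations of the lbb game: Spoiler-owned `⟨(s,t)⟩` and Duplicator-owned
`⟨(s,t),(a,s')⟩`. -/
inductive LConf (S : Type u) (A : Type v)
  | sp (p : S × S)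
  | dup (p : S × S) (c : A × S)

/-- Ownership in the lbb game. -/
def LConf.dupOwned {S : Type u} {A : Type v} : LConf S A → Prop
  | .sp _ => False
  | .dup _ _ => True

/-- Moves of the lbb game. -/
inductive LMove {S : Type u} {A : Type v} (L : LTS S A) : LConf S A → LConf S A → Prop
  | sp1 {s t a s'} (h : L.Trans s a s') :
      LMove L (LConf.sp (s, t)) (LConf.dup (s, t) (a, s'))
  | sp2 {s t a t'} (h : L.Trans t a t') :
      LMove L (LConf.sp (s, t)) (LConf.dup (t, s) (a, t'))
  | dup1 {u v u'} :
      LMove L (LConf.dup (u, v) (L.tau, u')) (LConf.sp (u', v))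
  | dup2 {u v a u' v'} (h : L.Trans v a v') :
      LMove L (LConf.dup (u, v) (a, u')) (LConf.sp (u', v'))
  | dup3 {u v a u' v'} (h : L.TauStep v v') :
      LMove L (LConf.dup (u, v) (a, u')) (LConf.sp (u, v'))

/-- `s ≡lb t`: Duplicator wins the lbb game from `⟨(s,t)⟩_S`; finite plays are won
by Duplicator iff Spoiler is stuck, and all infinite plays are won by Duplicator. -/
def LTS.lbbEquiv {S : Type u} {A : Type v} (L : LTS S A) (s t : S) : Prop :=
  DupWins LConf.dupOwned (LMove L) (fun _ => True) (LConf.sp (s, t))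

/-! ## The branching bisimulation (bb) game -/

/-- Configurations of the bb game: `⟨(s,t),c,r⟩` owned by Spoiler or Duplicator,
with challenge `c ∈ (A × S) ∪ {†}` (where `none` is `†`) and reward `r`. -/
inductive BConf (S : Type u) (A : Type v)
  | sp (p : S × S) (c : Option (A × S)) (r : Rw)
  | dup (p : S × S) (c : Option (A × S)) (r : Rw)

/-- Ownership in the bb game. -/
def BConf.dupOwned {S : Type u} {A : Type v} : BConf S A → Prop
  | .sp _ _ _ => False
  | .dup _ _ _ => True

/-- The configuration carries a `✓` reward. -/
def BConf.reward {S : Type u} {A : Type v} : BConf S A → Prop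
  | .sp _ _ r => r = Rw.check
  | .dup _ _ r => r = Rw.check

/-- Moves of the bb game. -/
inductive BMove {S : Type u} {A : Type v} (L : LTS S A) : BConf S A → BConf S A → Prop
  | sp1star {s t c r a s'} (h : L.Trans s a s') (hc : c = some (a, s') ∨ c = none) :
      BMove L (BConf.sp (s, t) c r) (BConf.dup (s, t) (some (a, s')) Rw.star)
  | sp1check {s t c r a s'} (h : L.Trans s a s')
      (hc : ¬(c = some (a, s') ∨ c = none)) :
      BMove L (BConf.sp (s, t) c r) (BConf.dup (s, t) (some (a, s')) Rw.check)
  | sp2 {s t c r a t'} (h : L.Trans t a t') :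
      BMove L (BConf.sp (s, t) c r) (BConf.dup (t, s) (some (a, t')) Rw.check)
  | dup1 {u v u' r} :
      BMove L (BConf.dup (u, v) (some (L.tau, u')) r) (BConf.sp (u', v) none Rw.check)
  | dup2 {u v a u' v' r} (h : L.Trans v a v') :
      BMove L (BConf.dup (u, v) (some (a, u')) r) (BConf.sp (u', v') none Rw.check)
  | dup3 {u v a u' v' r} (h : L.TauStep v v') :
      BMove L (BConf.dup (u, v) (some (a, u')) r)
        (BConf.sp (u, v') (some (a, u')) Rw.star)

/-- `s ≡b t`: Duplicator wins the bb game from `⟨(s,t),†,*⟩_S`, where infinite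
plays are won by Duplicator iff they yield infinitely many `✓` rewards. -/
def LTS.bbEquiv {S : Type u} {A : Type v} (L : LTS S A) (s t : S) : Prop :=
  DupWins BConf.dupOwned (BMove L) (BuchiWin BConf.reward) (BConf.sp (s, t) none Rw.star)

/-! ## The generic bisimulation (gb) game, and its explicit-divergence variant -/

/-- Configurations of the generic games: `⟨(s,t),c,m,r⟩` owned by Spoiler or
Duplicator, with challenge `c ∈ (A × S) ∪ {†}`, partial match
`m ∈ (S × {☹,☺}) ∪ {†}` and reward `r`. -/
inductive GConf (S : Type u) (A : Type v)
  | sp (p : S × S) (c : Option (A × S)) (m : Option (S × Face)) (r : Rw)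
  | dup (p : S × S) (c : Option (A × S)) (m : Option (S × Face)) (r : Rw)

/-- Ownership in the generic games. -/
def GConf.dupOwned {S : Type u} {A : Type v} : GConf S A → Prop
  | .sp _ _ _ _ => False
  | .dup _ _ _ _ => True

/-- The configuration carries a `✓` reward. -/
def GConf.reward {S : Type u} {A : Type v} : GConf S A → Prop
  | .sp _ _ _ r => r = Rw.check
  | .dup _ _ _ r => r = Rw.check

/-- Moves of the `E`-generic bisimulation game. The parameter `rw1` is the reward
handed out by Duplicator's rule (1): `✓` in the gb game, `*` in the gbed game. -/
inductive GMove {S : Type u} {A : Type v} (L : LTS S A) (E : Set Face) (rw1 : Rw) :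
    GConf S A → GConf S A → Prop
  | sp1 {s t c m r} (hc : c ≠ none) :
      GMove L E rw1 (GConf.sp (s, t) c m r) (GConf.dup (s, t) c m Rw.star)
  | sp2a {s t m r a s'} (h : L.Trans s a s') :
      GMove L E rw1 (GConf.sp (s, t) none m r)
        (GConf.dup (s, t) (some (a, s')) (some (t, Face.frown)) Rw.star)
  | sp2b {s t c m r a s'} (h : L.Trans s a s') (hc : c ≠ some (a, s')) :
      GMove L E rw1 (GConf.sp (s, t) c m r)
        (GConf.dup (s, t) (some (a, s')) (some (t, Face.frown)) Rw.check)
  | sp3 {s t c m r a t'} (h : L.Trans t a t') :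
      GMove L E rw1 (GConf.sp (s, t) c m r)
        (GConf.dup (t, s) (some (a, t')) (some (s, Face.frown)) Rw.check)
  | dup1 {u v u' vb f r} :
      GMove L E rw1 (GConf.dup (u, v) (some (L.tau, u')) (some (vb, f)) r)
        (GConf.sp (u', vb) none none rw1)
  | dup2a {u v a u' vb v' r} (h : L.Trans vb a v') :
      GMove L E rw1 (GConf.dup (u, v) (some (a, u')) (some (vb, Face.frown)) r)
        (GConf.sp (u', v') (some (a, u')) (some (v', Face.smile)) Rw.star)
  | dup2b {u v a u' vb v' r} (h : L.Trans vb a v') :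
      GMove L E rw1 (GConf.dup (u, v) (some (a, u')) (some (vb, Face.frown)) r)
        (GConf.sp (u', v') none none Rw.check)
  | dup2c {u v a u' vb v' r} (h : L.Trans vb a v') (hE : Face.smile ∈ E) :
      GMove L E rw1 (GConf.dup (u, v) (some (a, u')) (some (vb, Face.frown)) r)
        (GConf.sp (u, v) (some (a, u')) (some (v', Face.smile)) Rw.star)
  | dup3a {u v a u' vb f v' r} (h : L.TauStep vb v') :
      GMove L E rw1 (GConf.dup (u, v) (some (a, u')) (some (vb, f)) r)
        (GConf.sp (u, v') (some (a, u')) (some (v', f)) Rw.star)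
  | dup3b {u v a u' vb v' r} (h : L.TauStep vb v') :
      GMove L E rw1 (GConf.dup (u, v) (some (a, u')) (some (vb, Face.smile)) r)
        (GConf.sp (u', v') none none Rw.check)
  | dup3c {u v a u' vb f v' r} (h : L.TauStep vb v') (hE : f ∈ E) :
      GMove L E rw1 (GConf.dup (u, v) (some (a, u')) (some (vb, f)) r)
        (GConf.sp (u, v) (some (a, u')) (some (v', f)) Rw.star)

/-- `E(x,y) ⊆ {☹,☺}`: the smallest set containing `☹` when `x = o` and `☺` when
`y = o`. -/
def Exy (x y : XY) : Set Face :=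
  {f | (f = Face.frown ∧ x = XY.o) ∨ (f = Face.smile ∧ y = XY.o)}

/-- `s ≡_E t`: Duplicator wins the `E`-generic bisimulation game from
`⟨(s,t),†,†,*⟩_S`; infinite plays are won by Duplicator iff they yield infinitely
many `✓` rewards. -/
def LTS.gbEquiv {S : Type u} {A : Type v} (L : LTS S A) (E : Set Face) (s t : S) : Prop :=
  DupWins GConf.dupOwned (GMove L E Rw.check) (BuchiWin GConf.reward)
    (GConf.sp (s, t) none none Rw.star)

/-- `s ≡ed_E t`: Duplicator wins the `E`-generic bisimulation with explicit
divergence game from `⟨(s,t),†,†,*⟩_S`. -/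
def LTS.gbedEquiv {S : Type u} {A : Type v} (L : LTS S A) (E : Set Face) (s t : S) : Prop :=
  DupWins GConf.dupOwned (GMove L E Rw.star) (BuchiWin GConf.reward)
    (GConf.sp (s, t) none none Rw.star)

/-- The abstraction function `f(⟨(s,t),c,m,r⟩) = ⟨(s,t),c,r⟩` from configurations
of the generic game to configurations of the bb game, preserving ownership. -/
def fabs {S : Type u} {A : Type v} : GConf S A → BConf S A
  | .sp p c _ r => .sp p c r
  | .dup p c _ r => .dup p c r


section Soundness

open Classical

variable {C : Type w}

/-! ### Generic lemmas about plays and winning -/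

/-- Duplicator wins configuration `e` when using strategy `σ`. -/
def AWin (move : C → C → Prop) (owned : C → Prop) (reward : C → Prop)
    (σ : C → C) (e : C) : Prop :=
  ∀ π, IsPlay move π → π 0 = some e → ConsistentWith owned σ π →
    DupWinsPlay owned (BuchiWin reward) π

section PlayLemmas

variable {move : C → C → Prop} {owned : C → Prop} {reward : C → Prop}

theorem winsPlay_of_shift {π : ℕ → Option C} {e : C}
    (h0 : π 0 = some e)
    (h : DupWinsPlay owned (BuchiWin reward) (fun i => π (i + 1))) :
    DupWinsPlay owned (BuchiWin reward) π := by
  rcases h with ⟨c, ⟨i, hi, hi'⟩, hc⟩ | ⟨hinf, hb⟩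
  · exact Or.inl ⟨c, ⟨i + 1, hi, hi'⟩, hc⟩
  · refine Or.inr ⟨?_, ?_⟩
    · intro i
      cases i with
      | zero => simp [h0]
      | succ n => exact hinf n
    · intro n
      rcases hb n with ⟨i, hni, c, hc, hr⟩
      exact ⟨i + 1, by omega, c, hc, hr⟩

theorem winsPlay_shift_of {π : ℕ → Option C}
    (h1 : π 1 ≠ none)
    (h : DupWinsPlay owned (BuchiWin reward) π) :
    DupWinsPlay owned (BuchiWin reward) (fun i => π (i + 1)) := by
  rcases h with ⟨c, ⟨i, hi, hi'⟩, hc⟩ | ⟨hinf, hb⟩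
  · cases i with
    | zero => exact absurd hi' h1
    | succ n => exact Or.inl ⟨c, ⟨n, hi, hi'⟩, hc⟩
  · refine Or.inr ⟨fun i => hinf (i + 1), fun n => ?_⟩
    rcases hb (n + 1) with ⟨i, hni, c, hc, hr⟩
    obtain ⟨j, rfl⟩ : ∃ j, i = j + 1 := ⟨i - 1, by omega⟩
    exact ⟨j, by omega, c, hc, hr⟩

theorem winsPlay_of_addl {π : ℕ → Option C} :
    ∀ (n : ℕ), (∀ i < n, π i ≠ none) →
    DupWinsPlay owned (BuchiWin reward) (fun i => π (n + i)) →
    DupWinsPlay owned (BuchiWin reward) π := by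
  intro n
  induction n with
  | zero =>
      intro _ h
      have : (fun i => π (0 + i)) = π := by
        funext i; exact congrArg π (by omega)
      rwa [this] at h
  | succ m ih =>
      intro hne h
      apply ih (fun i hi => hne i (by omega))
      obtain ⟨e, he⟩ : ∃ e, π m = some e := by
        have := hne m (by omega)
        cases hm : π m with
        | none => exact absurd hm this
        | some e => exact ⟨e, rfl⟩
      apply winsPlay_of_shift (e := e) (by simpa using he)
      have : (fun i => (fun j => π (m + j)) (i + 1)) = fun i => π (m + 1 + i) := by
        funext i; exact congrArg π (by omega)
      rwa [this]

theorem isPlay_addl {π : ℕ → Option C} (hp : IsPlay move π) (n : ℕ) :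
    IsPlay move (fun i => π (n + i)) :=
  ⟨fun i => hp.1 (n + i), fun i => hp.2.1 (n + i), fun i => hp.2.2 (n + i)⟩

theorem consistent_addl {σ : C → C} {π : ℕ → Option C}
    (hc : ConsistentWith owned σ π) (n : ℕ) :
    ConsistentWith owned σ (fun i => π (n + i)) :=
  fun i => hc (n + i)

/-- Winning propagates along moves consistent with the strategy. -/
theorem AWin_step {σ : C → C} {e h : C}
    (hw : AWin move owned reward σ e) (hm : move e h)
    (hs : owned e → h = σ e) : AWin move owned reward σ h := by
  intro ρ hplay h0 hcons
  set π : ℕ → Option C := fun i => Nat.casesOn i (some e) ρ with hπ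
  have hp1 : π 1 = some h := h0
  have hplay' : IsPlay move π := by
    refine ⟨?_, ?_, ?_⟩
    · intro i c d hc hd
      cases i with
      | zero =>
          cases hc
          cases hp1.symm.trans hd
          exact hm
      | succ n => exact hplay.1 n c d hc hd
    · intro i c hc hd
      cases i with
      | zero => cases hp1.symm.trans hd
      | succ n => exact hplay.2.1 n c hc hd
    · intro i hi
      cases i with
      | zero => cases hi
      | succ n => exact hplay.2.2 n hi
  have hcons' : ConsistentWith owned σ π := by
    intro i c d hc ho hd
    cases i with
    | zero =>
        cases hc
        cases hp1.symm.trans hd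
        exact hs ho
    | succ n => exact hcons n c d hc ho hd
  have hwin := hw π hplay' rfl hcons'
  have := winsPlay_shift_of (owned := owned) (reward := reward)
    (π := π) (by rw [hp1]; exact fun hk => by cases hk) hwin
  exact this

theorem AWin_no_stuck {σ : C → C} {e : C}
    (hw : AWin move owned reward σ e) (ho : owned e) : ∃ d, move e d := by
  by_contra hn
  push_neg at hn
  set π : ℕ → Option C := fun i => if i = 0 then some e else none with hπ
  have hwin := hw π ?_ (by simp [hπ]) ?_
  · rcases hwin with ⟨c, ⟨i, hi, _⟩, hc⟩ | ⟨hinf, _⟩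
    · have : i = 0 := by
        by_contra h0
        simp [hπ, h0] at hi
      subst this
      simp [hπ] at hi
      exact hc (hi ▸ ho)
    · have := hinf 1
      simp [hπ] at this
  · refine ⟨?_, ?_, ?_⟩
    · intro i c d hc hd
      have hi : i = 0 := by by_contra h0; simp [hπ, h0] at hc
      subst hi
      simp [hπ] at hd
    · intro i c hc _
      have hi : i = 0 := by by_contra h0; simp [hπ, h0] at hc
      subst hi
      simp [hπ] at hc
      exact hc ▸ hn
    · intro i _
      simp [hπ]
  · intro i c d hc ho' hd
    have : i + 1 ≠ 0 := by omega
    simp [hπ, this] at hd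

theorem ends_exists {π : ℕ → Option C} (hp : IsPlay move π) {g : C}
    (h0 : π 0 = some g) {n : ℕ} (hn : π n = none) :
    ∃ i c, π i = some c ∧ π (i + 1) = none := by
  induction n with
  | zero => rw [h0] at hn; cases hn
  | succ m ih =>
      cases hm : π m with
      | none => exact ih hm
      | some c => exact ⟨m, c, hm, hn⟩

end PlayLemmas

/-! ### The strategy-combination engine -/

section Engine

variable (move : C → C → Prop) (owned : C → Prop) (reward : C → Prop)
variable (tog : C → C) (σ₁ σ₂ : C → C) (Corr : C → Prop) (μ : C → C)

/-- The set of configurations covered (up to reward toggle) by one of the two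
given winning strategies. -/
def W4 (d : C) : Prop :=
  AWin move owned reward σ₁ d ∨ AWin move owned reward σ₁ (tog d) ∨
  AWin move owned reward σ₂ d ∨ AWin move owned reward σ₂ (tog d)

/-- The combined strategy. -/
noncomputable def estrat : C → C := fun e =>
  if AWin move owned reward σ₁ e then σ₁ e
  else if AWin move owned reward σ₁ (tog e) then σ₁ (tog e)
  else if AWin move owned reward σ₂ e then σ₂ e
  else if AWin move owned reward σ₂ (tog e) then σ₂ (tog e)
  else if Corr e ∧ owned e then μ e
  else if h : ∃ d, move e d then h.choose else e

variable
  (htog : ∀ e d, move e d → move (tog e) d)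
  (htt : ∀ e, tog (tog e) = e)
  (hto : ∀ e, owned (tog e) ↔ owned e)
  (hv1 : ValidStrategy owned move σ₁) (hv2 : ValidStrategy owned move σ₂)
  (hCD : ∀ e, Corr e → ¬ W4 move owned reward tog σ₁ σ₂ e → owned e →
      move e (μ e) ∧ (W4 move owned reward tog σ₁ σ₂ (μ e) ∨ Corr (μ e)))
  (hCS : ∀ e d, Corr e → ¬ W4 move owned reward tog σ₁ σ₂ e → ¬ owned e →
      move e d → W4 move owned reward tog σ₁ σ₂ d ∨ Corr d)

include htog htt hto hv1 hv2 hCD in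
theorem estrat_valid :
    ValidStrategy owned move (estrat move owned reward tog σ₁ σ₂ Corr μ) := by
  intro e ho hex
  unfold estrat
  by_cases b1 : AWin move owned reward σ₁ e
  · rw [if_pos b1]; exact hv1 e ho hex
  rw [if_neg b1]
  by_cases b2 : AWin move owned reward σ₁ (tog e)
  · rw [if_pos b2]
    have hex' : ∃ d, move (tog e) d := ⟨hex.choose, htog _ _ hex.choose_spec⟩
    have h := htog _ _ (hv1 (tog e) ((hto e).mpr ho) hex')
    rwa [htt] at h
  rw [if_neg b2]
  by_cases b3 : AWin move owned reward σ₂ e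
  · rw [if_pos b3]; exact hv2 e ho hex
  rw [if_neg b3]
  by_cases b4 : AWin move owned reward σ₂ (tog e)
  · rw [if_pos b4]
    have hex' : ∃ d, move (tog e) d := ⟨hex.choose, htog _ _ hex.choose_spec⟩
    have h := htog _ _ (hv2 (tog e) ((hto e).mpr ho) hex')
    rwa [htt] at h
  rw [if_neg b4]
  by_cases b5 : Corr e ∧ owned e
  · rw [if_pos b5]
    exact (hCD e b5.1 (fun h => by
      rcases h with h | h | h | h
      exacts [b1 h, b2 h, b3 h, b4 h]) ho).1
  · rw [if_neg b5, dif_pos hex]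
    exact hex.choose_spec

include htog htt hto hv1 in
theorem estrat_step1 {c d : C} (hw : AWin move owned reward σ₁ c)
    (hm : move c d)
    (hcons : owned c → d = estrat move owned reward tog σ₁ σ₂ Corr μ c) :
    AWin move owned reward σ₁ d := by
  refine AWin_step hw hm (fun ho => ?_)
  rw [hcons ho]
  unfold estrat
  rw [if_pos hw]

include htog htt hto hv1 in
theorem estrat_step1t {c d : C} (h1 : ¬ AWin move owned reward σ₁ c)
    (hw : AWin move owned reward σ₁ (tog c)) (hm : move c d)
    (hcons : owned c → d = estrat move owned reward tog σ₁ σ₂ Corr μ c) :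
    AWin move owned reward σ₁ d := by
  refine AWin_step hw (htog _ _ hm) (fun ho => ?_)
  rw [hcons ((hto c).mp ho)]
  unfold estrat
  rw [if_neg h1, if_pos hw]

include htog htt hto hv2 in
theorem estrat_step2 {c d : C} (h1 : ¬ AWin move owned reward σ₁ c)
    (h2 : ¬ AWin move owned reward σ₁ (tog c))
    (hw : AWin move owned reward σ₂ c) (hm : move c d)
    (hcons : owned c → d = estrat move owned reward tog σ₁ σ₂ Corr μ c) :
    AWin move owned reward σ₂ d := by
  refine AWin_step hw hm (fun ho => ?_)
  rw [hcons ho]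
  unfold estrat
  rw [if_neg h1, if_neg h2, if_pos hw]

include htog htt hto hv2 in
theorem estrat_step2t {c d : C} (h1 : ¬ AWin move owned reward σ₁ c)
    (h2 : ¬ AWin move owned reward σ₁ (tog c))
    (h3 : ¬ AWin move owned reward σ₂ c)
    (hw : AWin move owned reward σ₂ (tog c)) (hm : move c d)
    (hcons : owned c → d = estrat move owned reward tog σ₁ σ₂ Corr μ c) :
    AWin move owned reward σ₂ d := by
  refine AWin_step hw (htog _ _ hm) (fun ho => ?_)
  rw [hcons ((hto c).mp ho)]
  unfold estrat
  rw [if_neg h1, if_neg h2, if_neg h3, if_pos hw]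

include htog htt hto hv1 hv2 hCD hCS in
theorem estrat_wins
    (hNT : ∀ π, IsPlay move π →
      ConsistentWith owned (estrat move owned reward tog σ₁ σ₂ Corr μ) π →
      (∀ j, ∃ c, π j = some c ∧ Corr c ∧
        ¬ W4 move owned reward tog σ₁ σ₂ c) → False)
    {g : C} (hg : ¬ owned g)
    (hcov : ∀ d, move g d → W4 move owned reward tog σ₁ σ₂ d ∨ Corr d) :
    AWin move owned reward (estrat move owned reward tog σ₁ σ₂ Corr μ) g := by
  classical
  intro π hp h0 hc
  have hstep : ∀ c d, (W4 move owned reward tog σ₁ σ₂ c ∨ Corr c) → move c d →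
      (owned c → d = estrat move owned reward tog σ₁ σ₂ Corr μ c) →
      W4 move owned reward tog σ₁ σ₂ d ∨ Corr d := by
    intro c d hWc hm hcons
    by_cases b1 : AWin move owned reward σ₁ c
    · exact Or.inl (Or.inl (estrat_step1 move owned reward tog σ₁ σ₂ Corr μ
        htog htt hto hv1 b1 hm hcons))
    by_cases b2 : AWin move owned reward σ₁ (tog c)
    · exact Or.inl (Or.inl (estrat_step1t move owned reward tog σ₁ σ₂ Corr μ
        htog htt hto hv1 b1 b2 hm hcons))
    by_cases b3 : AWin move owned reward σ₂ c
    · exact Or.inl (Or.inr (Or.inr (Or.inl (estrat_step2 move owned reward tog σ₁ σ₂ Corr μ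
        htog htt hto hv2 b1 b2 b3 hm hcons))))
    by_cases b4 : AWin move owned reward σ₂ (tog c)
    · exact Or.inl (Or.inr (Or.inr (Or.inl (estrat_step2t move owned reward tog σ₁ σ₂ Corr μ
        htog htt hto hv2 b1 b2 b3 b4 hm hcons))))
    have hnW : ¬ W4 move owned reward tog σ₁ σ₂ c := by
      intro h
      rcases h with h | h | h | h
      exacts [b1 h, b2 h, b3 h, b4 h]
    have hCorrc : Corr c := by
      rcases hWc with h | h
      · exact absurd h hnW
      · exact h
    by_cases ho : owned c
    · have h5 : estrat move owned reward tog σ₁ σ₂ Corr μ c = μ c := by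
        unfold estrat
        rw [if_neg b1, if_neg b2, if_neg b3, if_neg b4, if_pos ⟨hCorrc, ho⟩]
      rw [hcons ho, h5]
      exact (hCD c hCorrc hnW ho).2
    · exact hCS c d hCorrc hnW ho hm
  have hinv : ∀ i c, π (i + 1) = some c →
      W4 move owned reward tog σ₁ σ₂ c ∨ Corr c := by
    intro i
    induction i with
    | zero =>
        intro c hcs
        exact hcov c (hp.1 0 g c h0 hcs)
    | succ n ih =>
        intro c hcs
        cases hn : π (n + 1) with
        | none =>
            rw [hp.2.2 (n + 1) hn] at hcs
            exact nomatch hcs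
        | some c' =>
            exact hstep c' c (ih c' hn) (hp.1 (n + 1) c' c hn hcs)
              (fun ho => hc (n + 1) c' c hn ho hcs)
  have hasmove : ∀ c', (W4 move owned reward tog σ₁ σ₂ c' ∨ Corr c') → owned c' →
      ∃ d, move c' d := by
    intro c' hWc ho
    by_cases b1 : AWin move owned reward σ₁ c'
    · exact AWin_no_stuck b1 ho
    by_cases b2 : AWin move owned reward σ₁ (tog c')
    · obtain ⟨d, hd⟩ := AWin_no_stuck b2 ((hto c').mpr ho)
      have h := htog _ _ hd
      rw [htt] at h
      exact ⟨d, h⟩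
    by_cases b3 : AWin move owned reward σ₂ c'
    · exact AWin_no_stuck b3 ho
    by_cases b4 : AWin move owned reward σ₂ (tog c')
    · obtain ⟨d, hd⟩ := AWin_no_stuck b4 ((hto c').mpr ho)
      have h := htog _ _ hd
      rw [htt] at h
      exact ⟨d, h⟩
    have hnW : ¬ W4 move owned reward tog σ₁ σ₂ c' := by
      intro h
      rcases h with h | h | h | h
      exacts [b1 h, b2 h, b3 h, b4 h]
    have hCorrc : Corr c' := by
      rcases hWc with h | h
      · exact absurd h hnW
      · exact h
    exact ⟨μ c', (hCD c' hCorrc hnW ho).1⟩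
  by_cases hfin : InfinitePlay π
  · have hsome : ∀ i, ∃ c, π i = some c := by
      intro i
      cases h : π i with
      | none => exact absurd h (hfin i)
      | some c => exact ⟨c, rfl⟩
    by_cases h1 : ∃ j c, π j = some c ∧ AWin move owned reward σ₁ c
    · obtain ⟨j, c0, hj, hwc⟩ := h1
      have habs : ∀ k, ∀ c, π (j + k) = some c → AWin move owned reward σ₁ c := by
        intro k
        induction k with
        | zero =>
            intro c hcj
            injection hj.symm.trans hcj with h
            exact h ▸ hwc
        | succ n ih =>
            intro c hcn
            obtain ⟨c', hc'⟩ := hsome (j + n)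
            exact estrat_step1 move owned reward tog σ₁ σ₂ Corr μ htog htt hto hv1
              (ih c' hc') (hp.1 (j + n) c' c hc' hcn)
              (fun ho => hc (j + n) c' c hc' ho hcn)
      have hρ := hwc (fun i => π (j + i)) (isPlay_addl hp j) hj ?_
      · exact winsPlay_of_addl j (fun i _ => hfin i) hρ
      · intro i c d hci ho hdi
        have hwcc := habs i c hci
        have h := hc (j + i) c d hci ho hdi
        rw [h]
        unfold estrat
        rw [if_pos hwcc]
    · push_neg at h1
      have h1t : ∀ j c, π j = some c → ¬ AWin move owned reward σ₁ (tog c) := by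
        intro j c hj hcontra
        obtain ⟨d, hd⟩ := hsome (j + 1)
        exact h1 (j + 1) d hd (estrat_step1t move owned reward tog σ₁ σ₂ Corr μ
          htog htt hto hv1 (h1 j c hj) hcontra (hp.1 j c d hj hd)
          (fun ho => hc j c d hj ho hd))
      by_cases h2 : ∃ j c, π j = some c ∧ AWin move owned reward σ₂ c
      · obtain ⟨j, c0, hj, hwc⟩ := h2
        have habs : ∀ k, ∀ c, π (j + k) = some c → AWin move owned reward σ₂ c := by
          intro k
          induction k with
          | zero =>
              intro c hcj
              injection hj.symm.trans hcj with h
              exact h ▸ hwc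
          | succ n ih =>
              intro c hcn
              obtain ⟨c', hc'⟩ := hsome (j + n)
              exact estrat_step2 move owned reward tog σ₁ σ₂ Corr μ htog htt hto hv2
                (h1 (j + n) c' hc') (h1t (j + n) c' hc')
                (ih c' hc') (hp.1 (j + n) c' c hc' hcn)
                (fun ho => hc (j + n) c' c hc' ho hcn)
        have hρ := hwc (fun i => π (j + i)) (isPlay_addl hp j) hj ?_
        · exact winsPlay_of_addl j (fun i _ => hfin i) hρ
        · intro i c d hci ho hdi
          have hwcc := habs i c hci
          have h := hc (j + i) c d hci ho hdi
          rw [h]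
          unfold estrat
          rw [if_neg (h1 (j + i) c hci), if_neg (h1t (j + i) c hci), if_pos hwcc]
      · push_neg at h2
        have h2t : ∀ j c, π j = some c → ¬ AWin move owned reward σ₂ (tog c) := by
          intro j c hj hcontra
          obtain ⟨d, hd⟩ := hsome (j + 1)
          exact h2 (j + 1) d hd (estrat_step2t move owned reward tog σ₁ σ₂ Corr μ
            htog htt hto hv2 (h1 j c hj) (h1t j c hj) (h2 j c hj) hcontra
            (hp.1 j c d hj hd) (fun ho => hc j c d hj ho hd))
        exfalso
        refine hNT (fun i => π (i + 1))
          ⟨fun i => hp.1 (i + 1), fun i => hp.2.1 (i + 1), fun i => hp.2.2 (i + 1)⟩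
          (fun i => hc (i + 1)) (fun j => ?_)
        obtain ⟨cj, hcj⟩ := hsome (j + 1)
        have hnW : ¬ W4 move owned reward tog σ₁ σ₂ cj := by
          intro h
          rcases h with h | h | h | h
          exacts [h1 (j+1) cj hcj h, h1t (j+1) cj hcj h, h2 (j+1) cj hcj h,
            h2t (j+1) cj hcj h]
        refine ⟨cj, hcj, ?_, hnW⟩
        rcases hinv j cj hcj with h | h
        · exact absurd h hnW
        · exact h
  · have hex : ∃ n, π n = none := by
      by_contra h
      push_neg at h
      exact hfin (fun i => h i)
    obtain ⟨n, hn⟩ := hex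
    obtain ⟨i, c, hi, hi'⟩ := ends_exists hp h0 hn
    have hstuck : ∀ d, ¬ move c d := hp.2.1 i c hi hi'
    refine Or.inl ⟨c, ⟨i, hi, hi'⟩, ?_⟩
    intro ho
    cases i with
    | zero =>
        injection h0.symm.trans hi with h
        exact hg (h ▸ ho)
    | succ m =>
        obtain ⟨d, hd⟩ := hasmove c (hinv m c hi) ho
        exact hstuck d hd

end Engine

/-! ### Specialisation to the generic bisimulation game -/

section GB

variable {S : Type u} {A : Type v}

/-- Flip a reward. -/
def flipRw : Rw → Rw
  | Rw.star => Rw.check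
  | Rw.check => Rw.star

/-- Toggle the reward of a configuration. -/
def gtog : GConf S A → GConf S A
  | GConf.sp p c m r => GConf.sp p c m (flipRw r)
  | GConf.dup p c m r => GConf.dup p c m (flipRw r)

theorem gtog_gtog : ∀ e : GConf S A, gtog (gtog e) = e := by
  intro e
  cases e <;> rename_i p c m r <;> cases r <;> rfl

theorem gtog_owned : ∀ e : GConf S A, GConf.dupOwned (gtog e) ↔ GConf.dupOwned e := by
  intro e
  cases e <;> exact Iff.rfl

variable (L : LTS S A) (E : Set Face)

theorem gmove_rw {e d : GConf S A} (h : GMove L E Rw.check e d) :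
    GMove L E Rw.check (gtog e) d := by
  cases h with
  | sp1 hc => exact GMove.sp1 hc
  | sp2a h => exact GMove.sp2a h
  | sp2b h hc => exact GMove.sp2b h hc
  | sp3 h => exact GMove.sp3 h
  | dup1 => exact GMove.dup1
  | dup2a h => exact GMove.dup2a h
  | dup2b h => exact GMove.dup2b h
  | dup2c h hE => exact GMove.dup2c h hE
  | dup3a h => exact GMove.dup3a h
  | dup3b h => exact GMove.dup3b h
  | dup3c h hE => exact GMove.dup3c h hE

/-- Winning in the gb game with strategy `σ`. -/
def SWin (σ : GConf S A → GConf S A) (e : GConf S A) : Prop :=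
  AWin (GMove L E Rw.check) GConf.dupOwned GConf.reward σ e

/-- The toggle-adjusted version of a single strategy. -/
noncomputable def tauStrat (σ : GConf S A → GConf S A) : GConf S A → GConf S A :=
  estrat (GMove L E Rw.check) GConf.dupOwned GConf.reward gtog σ σ (fun _ => False) id

theorem tauStrat_valid {σ : GConf S A → GConf S A}
    (hv : ValidStrategy GConf.dupOwned (GMove L E Rw.check) σ) :
    ValidStrategy GConf.dupOwned (GMove L E Rw.check) (tauStrat L E σ) :=
  estrat_valid _ _ _ _ _ _ _ _ (fun _ _ => gmove_rw L E) gtog_gtog gtog_owned hv hv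
    (fun _ hc => hc.elim)

theorem cover_win {σ : GConf S A → GConf S A}
    (hv : ValidStrategy GConf.dupOwned (GMove L E Rw.check) σ)
    {g : GConf S A} (hg : ¬ GConf.dupOwned g)
    (hcov : ∀ d, GMove L E Rw.check g d → SWin L E σ d ∨ SWin L E σ (gtog d)) :
    SWin L E (tauStrat L E σ) g := by
  refine estrat_wins _ _ _ _ _ _ _ _ (fun _ _ => gmove_rw L E) gtog_gtog gtog_owned hv hv
    (fun _ hc => hc.elim) (fun _ _ hc => hc.elim) ?_ hg ?_
  · intro π _ _ h
    exact (h 0).choose_spec.2.1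
  · intro d hd
    rcases hcov d hd with h | h
    · exact Or.inl (Or.inl h)
    · exact Or.inl (Or.inr (Or.inl h))

theorem swin_step {σ : GConf S A → GConf S A} {e h : GConf S A}
    (hw : SWin L E σ e) (hm : GMove L E Rw.check e h)
    (hs : GConf.dupOwned e → h = σ e) : SWin L E σ h :=
  AWin_step hw hm hs

/-- Extraction at a challenge-free configuration: the reward is irrelevant. -/
theorem tt_win {σ : GConf S A → GConf S A}
    (hv : ValidStrategy GConf.dupOwned (GMove L E Rw.check) σ)
    {p : S × S} {r : Rw} (hw : SWin L E σ (GConf.sp p none none r)) :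
    SWin L E (tauStrat L E σ) (GConf.sp p none none Rw.star) := by
  obtain ⟨u, w⟩ := p
  refine cover_win L E hv (fun h => h) ?_
  intro d hd
  cases hd with
  | sp1 hc => exact absurd rfl hc
  | sp2a h => exact Or.inl (swin_step L E hw (GMove.sp2a h) (fun ho => ho.elim))
  | sp2b h hc => exact Or.inl (swin_step L E hw (GMove.sp2b h hc) (fun ho => ho.elim))
  | sp3 h => exact Or.inl (swin_step L E hw (GMove.sp3 h) (fun ho => ho.elim))

/-- Extraction at a frown configuration whose match-state is the second
component of its pair. -/
theorem frown_win {σ : GConf S A → GConf S A}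
    (hv : ValidStrategy GConf.dupOwned (GMove L E Rw.check) σ)
    {u w : S} {c : Option (A × S)} {r : Rw}
    (hw : SWin L E σ (GConf.sp (u, w) c (some (w, Face.frown)) r)) :
    SWin L E (tauStrat L E σ) (GConf.sp (u, w) none none Rw.star) := by
  refine cover_win L E hv (fun h => h) ?_
  intro d hd
  cases hd with
  | sp1 hc => exact absurd rfl hc
  | @sp2a _ _ _ _ b z h =>
      by_cases hceq : c = some (b, z)
      · subst hceq
        exact Or.inl (swin_step L E hw (GMove.sp1 (by simp)) (fun ho => ho.elim))
      · exact Or.inr (swin_step L E hw (GMove.sp2b h hceq) (fun ho => ho.elim))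
  | @sp2b _ _ _ _ _ b z h hc =>
      by_cases hceq : c = some (b, z)
      · subst hceq
        exact Or.inr (swin_step L E hw (GMove.sp1 (by simp)) (fun ho => ho.elim))
      · exact Or.inl (swin_step L E hw (GMove.sp2b h hceq) (fun ho => ho.elim))
  | sp3 h => exact Or.inl (swin_step L E hw (GMove.sp3 h) (fun ho => ho.elim))

/-- Symmetry of the game equivalence. -/
theorem symm_win {σ : GConf S A → GConf S A}
    (hv : ValidStrategy GConf.dupOwned (GMove L E Rw.check) σ)
    {s t : S} {r : Rw} (hw : SWin L E σ (GConf.sp (s, t) none none r)) :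
    SWin L E (tauStrat L E σ) (GConf.sp (t, s) none none Rw.star) := by
  refine cover_win L E hv (fun h => h) ?_
  intro d hd
  cases hd with
  | sp1 hc => exact absurd rfl hc
  | sp2a h => exact Or.inr (swin_step L E hw (GMove.sp3 h) (fun ho => ho.elim))
  | sp2b h hc => exact Or.inl (swin_step L E hw (GMove.sp3 h) (fun ho => ho.elim))
  | sp3 h =>
      exact Or.inl (swin_step L E hw (GMove.sp2b h (by simp)) (fun ho => ho.elim))

end GB

/-! ### The insisting play: Spoiler repeats the pending challenge -/

section Insist

variable {S : Type u} {A : Type v} (L : LTS S A) (E : Set Face)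

/-- The challenge component of a configuration. -/
def chal : GConf S A → Option (A × S)
  | GConf.sp _ c _ _ => c
  | GConf.dup _ c _ _ => c

/-- One round: Duplicator answers with `σ`, Spoiler re-issues the challenge. -/
def nxt (σ : GConf S A → GConf S A) : GConf S A → GConf S A := fun e =>
  match σ e with
  | GConf.sp p c m _ => GConf.dup p c m Rw.star
  | _ => e

theorem nxt_eq {σ : GConf S A → GConf S A} {e : GConf S A} {p c m r}
    (h : σ e = GConf.sp p c m r) : nxt σ e = GConf.dup p c m Rw.star := by
  unfold nxt
  rw [h]

/-- Shape of a Duplicator configuration with pending challenge `ch`. -/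
def DShape (ch : A × S) (e : GConf S A) : Prop :=
  ∃ p v f r, e = GConf.dup p (some ch) (some (v, f)) r

theorem insist_step {σ : GConf S A → GConf S A}
    (hv : ValidStrategy GConf.dupOwned (GMove L E Rw.check) σ)
    {ch : A × S} {e : GConf S A}
    (hw : SWin L E σ e) (hsh : DShape ch e) (hcl : chal (σ e) ≠ none) :
    ∃ p m, σ e = GConf.sp p (some ch) (some m) Rw.star := by
  obtain ⟨p, v, f, r, rfl⟩ := hsh
  obtain ⟨p1, p2⟩ := p
  have hm : GMove L E Rw.check
      (GConf.dup (p1, p2) (some ch) (some (v, f)) r)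
      (σ (GConf.dup (p1, p2) (some ch) (some (v, f)) r)) :=
    hv _ trivial (AWin_no_stuck hw trivial)
  generalize hd : σ (GConf.dup (p1, p2) (some ch) (some (v, f)) r) = d at hm hcl ⊢
  cases hm with
  | dup1 => exact absurd rfl hcl
  | dup2a h => exact ⟨_, _, rfl⟩
  | dup2b h => exact absurd rfl hcl
  | dup2c h hE => exact ⟨_, _, rfl⟩
  | dup3a h => exact ⟨_, _, rfl⟩
  | dup3b h => exact absurd rfl hcl
  | dup3c h hE => exact ⟨_, _, rfl⟩

theorem insist_exists {σ : GConf S A → GConf S A}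
    (hv : ValidStrategy GConf.dupOwned (GMove L E Rw.check) σ)
    {ch : A × S} {e0 : GConf S A}
    (hw : SWin L E σ e0) (hsh : DShape ch e0) :
    ∃ n, chal (σ ((nxt σ)^[n] e0)) = none := by
  by_contra hno
  push_neg at hno
  have hiter : ∀ n, SWin L E σ ((nxt σ)^[n] e0) ∧ DShape ch ((nxt σ)^[n] e0) ∧
      (1 ≤ n → ∃ p m, (nxt σ)^[n] e0 = GConf.dup p (some ch) (some m) Rw.star) := by
    intro n
    induction n with
    | zero =>
        refine ⟨by simpa using hw, by simpa using hsh, ?_⟩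
        intro h
        omega
    | succ m ih =>
        obtain ⟨p', m', hσ⟩ := insist_step L E hv ih.1 ih.2.1 (hno m)
        obtain ⟨pp, vv, ff, rr, hsheq⟩ := ih.2.1
        have howned : GConf.dupOwned ((nxt σ)^[m] e0) := by rw [hsheq]; trivial
        have h1 : SWin L E σ (σ ((nxt σ)^[m] e0)) :=
          swin_step L E ih.1 (hv _ howned (AWin_no_stuck ih.1 howned)) (fun _ => rfl)
        rw [hσ] at h1
        have h2 : SWin L E σ (GConf.dup p' (some ch) (some m') Rw.star) :=
          swin_step L E h1 (GMove.sp1 (by simp)) (fun ho => ho.elim)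
        have heq : (nxt σ)^[m + 1] e0 = GConf.dup p' (some ch) (some m') Rw.star := by
          rw [Function.iterate_succ_apply']
          exact nxt_eq hσ
        obtain ⟨mv, mf⟩ := m'
        exact ⟨heq ▸ h2, ⟨p', mv, mf, Rw.star, heq⟩, fun _ => ⟨p', (mv, mf), heq⟩⟩
  have hσsh : ∀ n, ∃ p m, σ ((nxt σ)^[n] e0) = GConf.sp p (some ch) (some m) Rw.star :=
    fun n => insist_step L E hv (hiter n).1 (hiter n).2.1 (hno n)
  have howned : ∀ n, GConf.dupOwned ((nxt σ)^[n] e0) := by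
    intro n
    obtain ⟨p, v, f, r, h⟩ := (hiter n).2.1
    rw [h]
    trivial
  have hmv : ∀ n, GMove L E Rw.check ((nxt σ)^[n] e0) (σ ((nxt σ)^[n] e0)) :=
    fun n => hv _ (howned n) (AWin_no_stuck (hiter n).1 (howned n))
  set π : ℕ → Option (GConf S A) :=
    fun i => some (if i % 2 = 0 then (nxt σ)^[i / 2] e0 else σ ((nxt σ)^[i / 2] e0)) with hπ
  have hπe : ∀ i, π i = some (if i % 2 = 0 then (nxt σ)^[i / 2] e0 else σ ((nxt σ)^[i / 2] e0)) :=
    fun i => rfl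
  have hplay : IsPlay (GMove L E Rw.check) π := by
    refine ⟨?_, ?_, ?_⟩
    · intro i c d hc hd
      rw [hπe i] at hc
      rw [hπe (i+1)] at hd
      injection hc with hc
      injection hd with hd
      by_cases hpar : i % 2 = 0
      · have h2 : (i + 1) % 2 ≠ 0 := by omega
        have h3 : (i + 1) / 2 = i / 2 := by omega
        rw [if_pos hpar] at hc
        rw [if_neg h2, h3] at hd
        rw [← hc, ← hd]
        exact hmv (i / 2)
      · have h2 : (i + 1) % 2 = 0 := by omega
        have h3 : (i + 1) / 2 = i / 2 + 1 := by omega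
        rw [if_neg hpar] at hc
        rw [if_pos h2, h3] at hd
        obtain ⟨p, m, hs⟩ := hσsh (i / 2)
        have hnx : (nxt σ)^[i / 2 + 1] e0 = GConf.dup p (some ch) (some m) Rw.star := by
          rw [Function.iterate_succ_apply']
          exact nxt_eq hs
        rw [← hc, ← hd, hs, hnx]
        exact GMove.sp1 (by simp)
    · intro i c hc hd
      exact (Option.some_ne_none _ hd).elim
    · intro i hi
      exact (Option.some_ne_none _ hi).elim
  have hcons : ConsistentWith GConf.dupOwned σ π := by
    intro i c d hc ho hd
    rw [hπe i] at hc
    rw [hπe (i+1)] at hd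
    injection hc with hc
    injection hd with hd
    by_cases hpar : i % 2 = 0
    · have h2 : (i + 1) % 2 ≠ 0 := by omega
      have h3 : (i + 1) / 2 = i / 2 := by omega
      rw [if_pos hpar] at hc
      rw [if_neg h2, h3] at hd
      rw [← hc, ← hd]
    · obtain ⟨p, m, hs⟩ := hσsh (i / 2)
      rw [if_neg hpar, hs] at hc
      rw [← hc] at ho
      exact ho.elim
  have h0 : π 0 = some e0 := by
    rw [hπe 0]
    norm_num
  have hwon := hw π hplay h0 hcons
  rcases hwon with ⟨c, ⟨i, _, hend⟩, _⟩ | ⟨_, hb⟩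
  · exact Option.some_ne_none _ hend
  · obtain ⟨i, hi1, c, hc, hrew⟩ := hb 1
    rw [hπe i] at hc
    injection hc with hc
    by_cases hpar : i % 2 = 0
    · have hge : 1 ≤ i / 2 := by omega
      obtain ⟨p, m, hs⟩ := (hiter (i / 2)).2.2 hge
      rw [if_pos hpar, hs] at hc
      rw [← hc] at hrew
      exact Rw.noConfusion hrew
    · obtain ⟨p, m, hs⟩ := hσsh (i / 2)
      rw [if_neg hpar, hs] at hc
      rw [← hc] at hrew
      exact Rw.noConfusion hrew

theorem insist {σ : GConf S A → GConf S A}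
    (hv : ValidStrategy GConf.dupOwned (GMove L E Rw.check) σ)
    {ch : A × S} {e0 : GConf S A}
    (hw : SWin L E σ e0) (hsh : DShape ch e0) :
    ∃ N, chal (σ ((nxt σ)^[N] e0)) = none ∧
      (∀ k < N, chal (σ ((nxt σ)^[k] e0)) ≠ none) ∧
      (∀ k ≤ N, SWin L E σ ((nxt σ)^[k] e0) ∧ DShape ch ((nxt σ)^[k] e0)) := by
  classical
  obtain h := insist_exists L E hv hw hsh
  refine ⟨Nat.find h, Nat.find_spec h, fun k hk => Nat.find_min h hk, ?_⟩
  intro k hk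
  induction k with
  | zero => exact ⟨by simpa using hw, by simpa using hsh⟩
  | succ m ih =>
      have hm' : m ≤ Nat.find h := by omega
      have hcl : chal (σ ((nxt σ)^[m] e0)) ≠ none := Nat.find_min h (by omega)
      obtain ⟨p', m', hσ⟩ := insist_step L E hv (ih hm').1 (ih hm').2 hcl
      obtain ⟨pp, vv, ff, rr, hsheq⟩ := (ih hm').2
      have howned : GConf.dupOwned ((nxt σ)^[m] e0) := by rw [hsheq]; trivial
      have h1 : SWin L E σ (σ ((nxt σ)^[m] e0)) :=
        swin_step L E (ih hm').1 (hv _ howned (AWin_no_stuck (ih hm').1 howned))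
          (fun _ => rfl)
      rw [hσ] at h1
      have h2 : SWin L E σ (GConf.dup p' (some ch) (some m') Rw.star) :=
        swin_step L E h1 (GMove.sp1 (by simp)) (fun ho => ho.elim)
      have heq : (nxt σ)^[m + 1] e0 = GConf.dup p' (some ch) (some m') Rw.star := by
        rw [Function.iterate_succ_apply']
        exact nxt_eq hσ
      obtain ⟨mv, mf⟩ := m'
      exact ⟨heq ▸ h2, ⟨p', mv, mf, Rw.star, heq⟩⟩

end Insist

/-! ### Smile extraction -/

section Smile

variable {S : Type u} {A : Type v}

/-- The Duplicator-owned smile configuration claiming `u' R w`. -/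
abbrev smSt (u' : S) (a : A) (w : S) : GConf S A :=
  GConf.dup (u', w) (some (a, u')) (some (w, Face.smile)) Rw.star

/-- The Duplicator-owned frown corridor configuration. -/
abbrev frD (u' : S) (a : A) (w : S) (r : Rw) : GConf S A :=
  GConf.dup (u', w) (some (a, u')) (some (w, Face.frown)) r

/-- The Spoiler-owned frown corridor configuration. -/
abbrev frS (u' : S) (a : A) (w : S) (r : Rw) : GConf S A :=
  GConf.sp (u', w) (some (a, u')) (some (w, Face.frown)) r

variable (L : LTS S A) (E : Set Face)

/-- The corridor region. -/
def smCorr (σ : GConf S A → GConf S A) (u' : S) (a : A) : GConf S A → Prop := fun z =>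
  (∃ w r, z = frD u' a w r ∧ SWin L E σ (smSt u' a w)) ∨
  (∃ w r, z = frS u' a w r ∧
    (SWin L E σ (GConf.sp (u', w) (some (a, u')) (some (w, Face.smile)) Rw.star) ∨
     SWin L E (tauStrat L E σ) (GConf.sp (u', w) none none Rw.star)))

/-- The corridor (mirror) strategy. -/
noncomputable def smMir (σ : GConf S A → GConf S A) (u' : S) (a : A) :
    GConf S A → GConf S A := fun z =>
  if h : ∃ w r, z = frD u' a w r then
    if h2 : ∃ v', L.TauStep h.choose v' ∧
        (σ (smSt u' a h.choose) =
          GConf.sp (u', v') (some (a, u')) (some (v', Face.smile)) Rw.star ∨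
         σ (smSt u' a h.choose) = GConf.sp (u', v') none none Rw.check) then
      GConf.sp (u', h2.choose) (some (a, u')) (some (h2.choose, Face.frown)) Rw.star
    else GConf.sp (u', h.choose) none none Rw.check
  else z

/-- Inversion of Duplicator's response at a smile configuration (when `☺ ∉ E`). -/
theorem smile_inv (hE : Face.smile ∉ E) {σ : GConf S A → GConf S A}
    (hv : ValidStrategy GConf.dupOwned (GMove L E Rw.check) σ) {u' w : S} {a : A}
    (hw : SWin L E σ (smSt u' a w)) :
    (a = L.tau ∧ σ (smSt u' a w) = GConf.sp (u', w) none none Rw.check) ∨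
    (∃ v', L.TauStep w v' ∧ σ (smSt u' a w) =
      GConf.sp (u', v') (some (a, u')) (some (v', Face.smile)) Rw.star) ∨
    (∃ v', L.TauStep w v' ∧ σ (smSt u' a w) =
      GConf.sp (u', v') none none Rw.check) := by
  have hm : GMove L E Rw.check (smSt u' a w) (σ (smSt u' a w)) :=
    hv _ trivial (AWin_no_stuck hw trivial)
  generalize hd : σ (smSt u' a w) = d at hm ⊢
  cases hm with
  | dup1 => exact Or.inl ⟨rfl, rfl⟩
  | dup3a h => exact Or.inr (Or.inl ⟨_, h, rfl⟩)
  | dup3b h => exact Or.inr (Or.inr ⟨_, h, rfl⟩)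
  | dup3c h hEc => exact absurd hEc hE

/-- Characterisation of the mirror strategy at corridor configurations. -/
theorem smMir_spec (hE : Face.smile ∉ E) {σ : GConf S A → GConf S A}
    (hv : ValidStrategy GConf.dupOwned (GMove L E Rw.check) σ) {u' w : S} {a : A} (r : Rw)
    (hw : SWin L E σ (smSt u' a w)) :
    (∃ v', L.TauStep w v' ∧
      smMir L σ u' a (frD u' a w r) =
        GConf.sp (u', v') (some (a, u')) (some (v', Face.frown)) Rw.star ∧
      (σ (smSt u' a w) =
          GConf.sp (u', v') (some (a, u')) (some (v', Face.smile)) Rw.star ∨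
       σ (smSt u' a w) = GConf.sp (u', v') none none Rw.check)) ∨
    (a = L.tau ∧
      smMir L σ u' a (frD u' a w r) = GConf.sp (u', w) none none Rw.check ∧
      σ (smSt u' a w) = GConf.sp (u', w) none none Rw.check) := by
  have hex : ∃ w1 r1, frD u' a w r = frD u' a w1 r1 := ⟨w, r, rfl⟩
  have hch : hex.choose = w := by
    obtain ⟨r1, heq⟩ := hex.choose_spec
    injection heq with h1 h2 h3 h4
    injection h3 with h3
    injection h3 with h3 h3'
    exact h3.symm
  unfold smMir
  rw [dif_pos hex, hch]
  by_cases h2 : ∃ v', L.TauStep w v' ∧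
      (σ (smSt u' a w) =
        GConf.sp (u', v') (some (a, u')) (some (v', Face.smile)) Rw.star ∨
       σ (smSt u' a w) = GConf.sp (u', v') none none Rw.check)
  · rw [dif_pos h2]
    exact Or.inl ⟨h2.choose, h2.choose_spec.1, rfl, h2.choose_spec.2⟩
  · rw [dif_neg h2]
    rcases smile_inv L E hE hv hw with ⟨ha, hσ⟩ | ⟨v', hts, hσ⟩ | ⟨v', hts, hσ⟩
    · exact Or.inr ⟨ha, rfl, hσ⟩
    · exact absurd ⟨v', hts, Or.inl hσ⟩ h2
    · exact absurd ⟨v', hts, Or.inr hσ⟩ h2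
/-- Corridor step for Duplicator-owned corridor configurations. -/
theorem smCD (hE : Face.smile ∉ E) {σ : GConf S A → GConf S A}
    (hv : ValidStrategy GConf.dupOwned (GMove L E Rw.check) σ) {u' : S} {a : A} :
    ∀ e, smCorr L E σ u' a e →
      ¬ W4 (GMove L E Rw.check) GConf.dupOwned GConf.reward gtog σ (tauStrat L E σ) e →
      GConf.dupOwned e →
      GMove L E Rw.check e (smMir L σ u' a e) ∧
        (W4 (GMove L E Rw.check) GConf.dupOwned GConf.reward gtog σ (tauStrat L E σ)
          (smMir L σ u' a e) ∨ smCorr L E σ u' a (smMir L σ u' a e)) := by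
  intro e hc _ ho
  rcases hc with ⟨w, r, rfl, hst⟩ | ⟨w, r, rfl, _⟩
  case inr => exact absurd ho (fun h => h)
  have hstep : SWin L E σ (σ (smSt u' a w)) :=
    swin_step L E hst (hv _ trivial (AWin_no_stuck hst trivial)) (fun _ => rfl)
  rcases smMir_spec L E hE hv r hst with ⟨v', hts, hmir, hdisj⟩ | ⟨ha, hmir, hσ⟩
  · refine ⟨?_, ?_⟩
    · rw [hmir]
      exact GMove.dup3a hts
    · right
      refine Or.inr ⟨v', Rw.star, hmir, ?_⟩
      rcases hdisj with hσl | hσr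
      · left
        rw [← hσl]
        exact hstep
      · right
        refine tt_win L E hv (r := Rw.check) ?_
        rw [← hσr]
        exact hstep
  · subst ha
    refine ⟨?_, ?_⟩
    · rw [hmir]
      exact GMove.dup1
    · left
      left
      rw [hmir, ← hσ]
      exact hstep

/-- Corridor step for Spoiler-owned corridor configurations. -/
theorem smCS (hE : Face.smile ∉ E) {σ : GConf S A → GConf S A}
    (hv : ValidStrategy GConf.dupOwned (GMove L E Rw.check) σ) {u' : S} {a : A}
    (hself : L.Trans u' a u') :
    ∀ e d, smCorr L E σ u' a e →
      ¬ W4 (GMove L E Rw.check) GConf.dupOwned GConf.reward gtog σ (tauStrat L E σ) e →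
      ¬ GConf.dupOwned e → GMove L E Rw.check e d →
      W4 (GMove L E Rw.check) GConf.dupOwned GConf.reward gtog σ (tauStrat L E σ) d ∨
        smCorr L E σ u' a d := by
  intro e d hc _ ho hm
  rcases hc with ⟨w, r, rfl, _⟩ | ⟨w, r, rfl, hdisj⟩
  case inl => exact absurd trivial ho
  cases hm with
  | sp1 hc' =>
      rcases hdisj with hσs | hτ
      · right
        left
        exact ⟨w, Rw.star, rfl,
          swin_step L E hσs (GMove.sp1 (by simp)) (fun ho' => ho'.elim)⟩
      · left
        exact Or.inr (Or.inr (Or.inl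
          (swin_step L E hτ (GMove.sp2a hself) (fun ho' => ho'.elim))))
  | sp2b h hc' =>
      rcases hdisj with hσs | hτ
      · exact Or.inl (Or.inl (swin_step L E hσs (GMove.sp2b h hc') (fun ho' => ho'.elim)))
      · exact Or.inl (Or.inr (Or.inr (Or.inl
          (swin_step L E hτ (GMove.sp2b h (by simp)) (fun ho' => ho'.elim)))))
  | sp3 h =>
      rcases hdisj with hσs | hτ
      · exact Or.inl (Or.inl (swin_step L E hσs (GMove.sp3 h) (fun ho' => ho'.elim)))
      · exact Or.inl (Or.inr (Or.inr (Or.inl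
          (swin_step L E hτ (GMove.sp3 h) (fun ho' => ho'.elim)))))
/-- No infinite play can remain in the corridor forever. -/
theorem smNT (hE : Face.smile ∉ E) {σ : GConf S A → GConf S A}
    (hv : ValidStrategy GConf.dupOwned (GMove L E Rw.check) σ) {u' : S} {a : A}
    (hself : L.Trans u' a u') :
    ∀ π, IsPlay (GMove L E Rw.check) π →
      ConsistentWith GConf.dupOwned
        (estrat (GMove L E Rw.check) GConf.dupOwned GConf.reward gtog σ (tauStrat L E σ)
          (smCorr L E σ u' a) (smMir L σ u' a)) π →
      (∀ j, ∃ c, π j = some c ∧ smCorr L E σ u' a c ∧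
        ¬ W4 (GMove L E Rw.check) GConf.dupOwned GConf.reward gtog σ (tauStrat L E σ) c) →
      False := by
  intro π hp hcons htail
  have hgetD : ∀ j w r, π j = some (frD u' a w r) →
      ¬ W4 (GMove L E Rw.check) GConf.dupOwned GConf.reward gtog σ (tauStrat L E σ)
        (frD u' a w r) := by
    intro j w r hj
    obtain ⟨c, hc, _, hnw⟩ := htail j
    injection hj.symm.trans hc with h
    exact h ▸ hnw
  have hES : ∀ w r, SWin L E σ (smSt u' a w) →
      ¬ W4 (GMove L E Rw.check) GConf.dupOwned GConf.reward gtog σ (tauStrat L E σ)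
        (frD u' a w r) →
      estrat (GMove L E Rw.check) GConf.dupOwned GConf.reward gtog σ (tauStrat L E σ)
        (smCorr L E σ u' a) (smMir L σ u' a) (frD u' a w r) =
        smMir L σ u' a (frD u' a w r) := by
    intro w r hst hnw
    unfold estrat
    rw [if_neg (fun h => hnw (Or.inl h)),
        if_neg (fun h => hnw (Or.inr (Or.inl h))),
        if_neg (fun h => hnw (Or.inr (Or.inr (Or.inl h)))),
        if_neg (fun h => hnw (Or.inr (Or.inr (Or.inr h)))),
        if_pos (⟨Or.inl ⟨w, r, rfl, hst⟩, trivial⟩ :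
          smCorr L E σ u' a (frD u' a w r) ∧ GConf.dupOwned (frD u' a w r))]
  have hnext : ∀ j w r, π j = some (frD u' a w r) → SWin L E σ (smSt u' a w) →
      π (j + 1) = some (smMir L σ u' a (frD u' a w r)) := by
    intro j w r hj hst
    obtain ⟨c', hc', _, _⟩ := htail (j + 1)
    have h := hcons j _ c' hj trivial hc'
    rw [hc', h, hES w r hst (hgetD j w r hj)]
  -- find a Duplicator corridor configuration
  have hstart : ∃ j w r, π j = some (frD u' a w r) ∧ SWin L E σ (smSt u' a w) := by
    obtain ⟨c0, h0, hc0, hw0⟩ := htail 0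
    rcases hc0 with ⟨w, r, heq, hst⟩ | ⟨w, r, heq, hdisj⟩
    · exact ⟨0, w, r, heq ▸ h0, hst⟩
    · obtain ⟨c1, h1, hc1, hw1⟩ := htail 1
      rw [heq] at h0
      have hmv : GMove L E Rw.check (frS u' a w r) c1 := hp.1 0 _ c1 h0 h1
      cases hmv with
      | sp1 hc' =>
          rcases hdisj with hσs | hτ
          · exact ⟨1, w, Rw.star, h1,
              swin_step L E hσs (GMove.sp1 (by simp)) (fun x => x.elim)⟩
          · exact absurd (Or.inr (Or.inr (Or.inl
              (swin_step L E hτ (GMove.sp2a hself) (fun x => x.elim))))) hw1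
      | sp2b h hc' =>
          rcases hdisj with hσs | hτ
          · exact absurd (Or.inl
              (swin_step L E hσs (GMove.sp2b h hc') (fun x => x.elim))) hw1
          · exact absurd (Or.inr (Or.inr (Or.inl
              (swin_step L E hτ (GMove.sp2b h (by simp)) (fun x => x.elim))))) hw1
      | sp3 h =>
          rcases hdisj with hσs | hτ
          · exact absurd (Or.inl
              (swin_step L E hσs (GMove.sp3 h) (fun x => x.elim))) hw1
          · exact absurd (Or.inr (Or.inr (Or.inl
              (swin_step L E hτ (GMove.sp3 h) (fun x => x.elim))))) hw1
  obtain ⟨j1, w0, r0, hj1, hst0⟩ := hstart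
  obtain ⟨N, hclose, hwalk, hfacts⟩ := insist L E hv hst0
    ⟨(u', w0), w0, Face.smile, Rw.star, rfl⟩
  have hQ : ∀ k, k ≤ N → ∃ v r', π (j1 + 2 * k) = some (frD u' a v r') ∧
      (nxt σ)^[k] (smSt u' a w0) = smSt u' a v := by
    intro k
    induction k with
    | zero => exact fun _ => ⟨w0, r0, hj1, rfl⟩
    | succ m ih =>
        intro hk
        obtain ⟨v, r', hπm, hitm⟩ := ih (by omega)
        have hstv : SWin L E σ (smSt u' a v) := by
          have h := (hfacts m (by omega)).1
          rwa [hitm] at h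
        have hclm : chal (σ ((nxt σ)^[m] (smSt u' a w0))) ≠ none := hwalk m (by omega)
        rw [hitm] at hclm
        obtain ⟨v1, hts, hσ⟩ : ∃ v1, L.TauStep v v1 ∧ σ (smSt u' a v) =
            GConf.sp (u', v1) (some (a, u')) (some (v1, Face.smile)) Rw.star := by
          rcases smile_inv L E hE hv hstv with ⟨_, hσ0⟩ | ⟨v1, hts, hσ0⟩ | ⟨_, _, hσ0⟩
          · rw [hσ0] at hclm
            exact absurd rfl hclm
          · exact ⟨v1, hts, hσ0⟩
          · rw [hσ0] at hclm
            exact absurd rfl hclm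
        have hit1 : (nxt σ)^[m + 1] (smSt u' a w0) = smSt u' a v1 := by
          rw [Function.iterate_succ_apply', hitm]
          exact nxt_eq hσ
        have hπ1 := hnext _ v r' hπm hstv
        obtain ⟨v2, hts2, hmir, hdisj⟩ : ∃ v2, L.TauStep v v2 ∧
            smMir L σ u' a (frD u' a v r') =
              GConf.sp (u', v2) (some (a, u')) (some (v2, Face.frown)) Rw.star ∧
            (σ (smSt u' a v) =
                GConf.sp (u', v2) (some (a, u')) (some (v2, Face.smile)) Rw.star ∨
             σ (smSt u' a v) = GConf.sp (u', v2) none none Rw.check) := by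
          rcases smMir_spec L E hE hv r' hstv with hres | ⟨_, _, hσc⟩
          · exact hres
          · rw [hσc] at hσ
            injection hσ with e1 e2
            exact nomatch e2
        have hv21 : v2 = v1 := by
          rcases hdisj with hl | hr
          · rw [hσ] at hl
            injection hl with e1 e2 e3 e4
            injection e1 with ea eb
            exact eb.symm
          · rw [hσ] at hr
            injection hr with e1 e2
            exact nomatch e2
        subst hv21
        rw [hmir] at hπ1
        have hsm1 : SWin L E σ
            (GConf.sp (u', v2) (some (a, u')) (some (v2, Face.smile)) Rw.star) := by
          have h := swin_step L E hstv
            (hv _ trivial (AWin_no_stuck hstv trivial)) (fun _ => rfl)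
          rwa [hσ] at h
        obtain ⟨cq, hπ2, hcq, hwq⟩ := htail (j1 + 2 * m + 1 + 1)
        have hmv2 : GMove L E Rw.check (frS u' a v2 Rw.star) cq :=
          hp.1 (j1 + 2 * m + 1) _ cq hπ1 hπ2
        cases hmv2 with
        | sp1 hc' =>
            exact ⟨v2, Rw.star, hπ2, hit1⟩
        | sp2b h hc' =>
            exact absurd (Or.inl
              (swin_step L E hsm1 (GMove.sp2b h hc') (fun x => x.elim))) hwq
        | sp3 h =>
            exact absurd (Or.inl
              (swin_step L E hsm1 (GMove.sp3 h) (fun x => x.elim))) hwq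
  -- the final contradiction at step N
  obtain ⟨v, r', hπN, hitN⟩ := hQ N le_rfl
  have hstv : SWin L E σ (smSt u' a v) := by
    have h := (hfacts N le_rfl).1
    rwa [hitN] at h
  have hclN : chal (σ (smSt u' a v)) = none := by
    rw [← hitN]
    exact hclose
  have hstep : SWin L E σ (σ (smSt u' a v)) :=
    swin_step L E hstv (hv _ trivial (AWin_no_stuck hstv trivial)) (fun _ => rfl)
  have hπ1 := hnext _ v r' hπN hstv
  obtain ⟨cm, hπ1', hcm, hw1⟩ := htail (j1 + 2 * N + 1)
  rcases smMir_spec L E hE hv r' hstv with ⟨v2, hts2, hmir, hdisj⟩ | ⟨_, hmir, hσc⟩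
  · have hσr : σ (smSt u' a v) = GConf.sp (u', v2) none none Rw.check := by
      rcases hdisj with hl | hr
      · rw [hl] at hclN
        exact (Option.some_ne_none _ hclN).elim
      · exact hr
    have hτ : SWin L E (tauStrat L E σ) (GConf.sp (u', v2) none none Rw.star) := by
      refine tt_win L E hv (r := Rw.check) ?_
      rw [← hσr]
      exact hstep
    rw [hmir] at hπ1
    obtain ⟨cq, hπ2, hcq, hwq⟩ := htail (j1 + 2 * N + 1 + 1)
    have hmv2 : GMove L E Rw.check (frS u' a v2 Rw.star) cq :=
      hp.1 (j1 + 2 * N + 1) _ cq hπ1 hπ2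
    cases hmv2 with
    | sp1 hc' =>
        exact absurd (Or.inr (Or.inr (Or.inl
          (swin_step L E hτ (GMove.sp2a hself) (fun x => x.elim))))) hwq
    | sp2b h hc' =>
        exact absurd (Or.inr (Or.inr (Or.inl
          (swin_step L E hτ (GMove.sp2b h (by simp)) (fun x => x.elim))))) hwq
    | sp3 h =>
        exact absurd (Or.inr (Or.inr (Or.inl
          (swin_step L E hτ (GMove.sp3 h) (fun x => x.elim))))) hwq
  · rw [hmir] at hπ1
    injection hπ1.symm.trans hπ1' with h
    refine hw1 (Or.inl ?_)
    rw [← h, ← hσc]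
    exact hstep

/-- Smile extraction: winning a smile configuration implies game equivalence of
the underlying pair (for `☺ ∉ E`). -/
theorem smile_extract (hE : Face.smile ∉ E) {σ : GConf S A → GConf S A}
    (hv : ValidStrategy GConf.dupOwned (GMove L E Rw.check) σ) {u' w0 : S} {a : A}
    (hw : SWin L E σ
      (GConf.sp (u', w0) (some (a, u')) (some (w0, Face.smile)) Rw.star)) :
    L.gbEquiv E u' w0 := by
  classical
  by_cases hself : L.Trans u' a u'
  · refine ⟨estrat (GMove L E Rw.check) GConf.dupOwned GConf.reward gtog σ
      (tauStrat L E σ) (smCorr L E σ u' a) (smMir L σ u' a), ?_, ?_⟩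
    · exact estrat_valid _ _ _ _ _ _ _ _ (fun _ _ => gmove_rw L E) gtog_gtog gtog_owned
        hv (tauStrat_valid L E hv) (smCD L E hE hv)
    · refine estrat_wins _ _ _ _ _ _ _ _ (fun _ _ => gmove_rw L E) gtog_gtog gtog_owned
        hv (tauStrat_valid L E hv) (smCD L E hE hv) (smCS L E hE hv hself)
        (smNT L E hE hv hself) (fun h => h) ?_
      intro d hd
      cases hd with
      | sp1 hc => exact absurd rfl hc
      | @sp2a _ _ _ _ b z h =>
          by_cases hbz : (a, u') = (b, z)
          · refine Or.inr (Or.inl ⟨w0, Rw.star, ?_, ?_⟩)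
            · rw [← hbz]
            · exact swin_step L E hw (GMove.sp1 (by simp)) (fun x => x.elim)
          · exact Or.inl (Or.inr (Or.inl (swin_step L E hw
              (GMove.sp2b h (fun hcon => hbz (Option.some.inj hcon)))
              (fun x => x.elim))))
      | @sp2b _ _ _ _ _ b z h hc =>
          by_cases hbz : (a, u') = (b, z)
          · refine Or.inr (Or.inl ⟨w0, Rw.check, ?_, ?_⟩)
            · rw [← hbz]
            · exact swin_step L E hw (GMove.sp1 (by simp)) (fun x => x.elim)
          · exact Or.inl (Or.inl (swin_step L E hw
              (GMove.sp2b h (fun hcon => hbz (Option.some.inj hcon)))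
              (fun x => x.elim)))
      | sp3 h =>
          exact Or.inl (Or.inl (swin_step L E hw (GMove.sp3 h) (fun x => x.elim)))
  · refine ⟨tauStrat L E σ, tauStrat_valid L E hv, ?_⟩
    refine cover_win L E hv (fun h => h) ?_
    intro d hd
    cases hd with
    | sp1 hc => exact absurd rfl hc
    | @sp2a _ _ _ _ b z h =>
        have hne : (some (a, u') : Option (A × S)) ≠ some (b, z) := by
          intro hcon
          injection hcon with h1
          injection h1 with ha hz
          subst ha
          subst hz
          exact hself h
        exact Or.inr (swin_step L E hw (GMove.sp2b h hne) (fun x => x.elim))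
    | @sp2b _ _ _ _ _ b z h hc =>
        have hne : (some (a, u') : Option (A × S)) ≠ some (b, z) := by
          intro hcon
          injection hcon with h1
          injection h1 with ha hz
          subst ha
          subst hz
          exact hself h
        exact Or.inl (swin_step L E hw (GMove.sp2b h hne) (fun x => x.elim))
    | sp3 h => exact Or.inl (swin_step L E hw (GMove.sp3 h) (fun x => x.elim))

end Smile
/-! ### Membership in `Exy` -/

theorem frown_mem_Exy {x y : XY} : Face.frown ∈ Exy x y ↔ x = XY.o := by
  simp [Exy]

theorem smile_mem_Exy {x y : XY} : Face.smile ∈ Exy x y ↔ y = XY.o := by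
  simp [Exy]

end Soundness

/-- Soundness of the generic bisimulation game: the relation
`≡_{E(x,y)}` induced by the `E(x,y)`-generic bisimulation game is an
`(x,y)`-generic bisimulation. -/
theorem gbEquiv_isGenBisim {S : Type u} {A : Type v} (L : LTS S A) (x y : XY) :
    L.IsGenBisim x y (fun s t => L.gbEquiv (Exy x y) s t) := by
  classical
  constructor
  · -- symmetry
    intro s t h
    obtain ⟨σ, hv, hw⟩ : ∃ σ, ValidStrategy GConf.dupOwned (GMove L (Exy x y) Rw.check) σ ∧
        SWin L (Exy x y) σ (GConf.sp (s, t) none none Rw.star) := h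
    exact ⟨tauStrat L (Exy x y) σ, tauStrat_valid L (Exy x y) hv, symm_win L (Exy x y) hv hw⟩
  · -- the transfer condition
    intro s t a s' hRst htr
    have hR : L.gbEquiv (Exy x y) s t := hRst
    obtain ⟨σ, hv, hw⟩ : ∃ σ, ValidStrategy GConf.dupOwned (GMove L (Exy x y) Rw.check) σ ∧
        SWin L (Exy x y) σ (GConf.sp (s, t) none none Rw.star) := hRst
    set E := Exy x y with hE
    set R : S → S → Prop := fun u w => L.gbEquiv E u w with hRdef
    have hw0 : SWin L E σ
        (GConf.dup (s, t) (some (a, s')) (some (t, Face.frown)) Rw.star) :=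
      swin_step L E hw (GMove.sp2a htr) (fun x => x.elim)
    obtain ⟨N, hclose, hwalk, hfacts⟩ := insist L E hv hw0
      ⟨(s, t), t, Face.frown, Rw.star, rfl⟩
    have key : ∀ k, k ≤ N → ∀ p v f r',
        (nxt σ)^[k] (GConf.dup (s, t) (some (a, s')) (some (t, Face.frown)) Rw.star) = GConf.dup p (some (a, s')) (some (v, f)) r' →
        (f = Face.frown →
          L.TauStar t v ∧ (x = XY.b → p = (s, v) ∧ R s v) ∧
          (v = t ∨ ∃ w, L.TauStar t w ∧ L.TauStep w v ∧ (x = XY.b → R s w))) ∧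
        (f = Face.smile →
          ∃ t1 t2, L.GenTauStar x R s t t1 ∧ L.Trans t1 a t2 ∧ L.TauStar t2 v ∧
            (y = XY.b → R s' t2)) := by
      intro k
      induction k with
      | zero =>
          intro _ p v f r' heq
          injection heq with e1 e2 e3 e4
          injection e3 with e3
          injection e3 with ev ef
          subst e1
          subst ev
          subst ef
          constructor
          · intro _
            exact ⟨Relation.ReflTransGen.refl, fun _ => ⟨rfl, hR⟩, Or.inl rfl⟩
          · intro hcon
            exact Face.noConfusion hcon
      | succ m ih =>
          intro hk p v f r' heq
          have hmN : m ≤ N := by omega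
          obtain ⟨hwm, hshm⟩ := hfacts m hmN
          obtain ⟨pm, vm, fm, rm, heqm⟩ := hshm
          obtain ⟨pm1, pm2⟩ := pm
          have ihm := ih hmN (pm1, pm2) vm fm rm heqm
          have hwalkm : chal (σ ((nxt σ)^[m] (GConf.dup (s, t) (some (a, s')) (some (t, Face.frown)) Rw.star))) ≠ none := hwalk m (by omega)
          have howm : GConf.dupOwned ((nxt σ)^[m] (GConf.dup (s, t) (some (a, s')) (some (t, Face.frown)) Rw.star)) := by rw [heqm]; trivial
          have hm : GMove L E Rw.check ((nxt σ)^[m] (GConf.dup (s, t) (some (a, s')) (some (t, Face.frown)) Rw.star)) (σ ((nxt σ)^[m] (GConf.dup (s, t) (some (a, s')) (some (t, Face.frown)) Rw.star))) :=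
            hv _ howm (AWin_no_stuck hwm howm)
          have hstepm : SWin L E σ (σ ((nxt σ)^[m] (GConf.dup (s, t) (some (a, s')) (some (t, Face.frown)) Rw.star))) :=
            swin_step L E hwm hm (fun _ => rfl)
          generalize hσm : σ ((nxt σ)^[m] (GConf.dup (s, t) (some (a, s')) (some (t, Face.frown)) Rw.star)) = dd at hm hwalkm hstepm
          rw [heqm] at hm
          cases hm with
          | dup1 => exact absurd rfl hwalkm
          | dup2b h => exact absurd rfl hwalkm
          | dup3b h => exact absurd rfl hwalkm
          | @dup2a _ _ _ _ _ v'' _ h =>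
              have hit1 : (nxt σ)^[m + 1] (GConf.dup (s, t) (some (a, s')) (some (t, Face.frown)) Rw.star) =
                  GConf.dup (s', v'') (some (a, s')) (some (v'', Face.smile)) Rw.star := by
                rw [Function.iterate_succ_apply']
                exact nxt_eq hσm
              have heq' := hit1.symm.trans heq
              injection heq' with e1 e2 e3 e4
              injection e3 with e3
              injection e3 with ev ef
              subst e1
              subst ev
              subst ef
              obtain ⟨hts, hxb, _⟩ := ihm.1 rfl
              refine ⟨fun hcon => Face.noConfusion hcon, fun _ => ?_⟩
              refine ⟨vm, v'', ⟨hts, fun hx => ⟨hR, (hxb hx).2⟩⟩, h,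
                Relation.ReflTransGen.refl, fun hy => ?_⟩
              refine smile_extract L E (a := a) ?_ hv ?_
              · intro hcon
                rw [smile_mem_Exy] at hcon
                rw [hy] at hcon
                exact XY.noConfusion hcon
              · exact hstepm
          | @dup2c _ _ _ _ _ v'' _ h hEc =>
              have hit1 : (nxt σ)^[m + 1] (GConf.dup (s, t) (some (a, s')) (some (t, Face.frown)) Rw.star) =
                  GConf.dup (pm1, pm2) (some (a, s')) (some (v'', Face.smile)) Rw.star := by
                rw [Function.iterate_succ_apply']
                exact nxt_eq hσm
              have heq' := hit1.symm.trans heq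
              injection heq' with e1 e2 e3 e4
              injection e3 with e3
              injection e3 with ev ef
              subst e1
              subst ev
              subst ef
              obtain ⟨hts, hxb, _⟩ := ihm.1 rfl
              refine ⟨fun hcon => Face.noConfusion hcon, fun _ => ?_⟩
              refine ⟨vm, v'', ⟨hts, fun hx => ⟨hR, (hxb hx).2⟩⟩, h,
                Relation.ReflTransGen.refl, fun hy => ?_⟩
              rw [smile_mem_Exy, hy] at hEc
              exact XY.noConfusion hEc
          | @dup3a _ _ _ _ _ _ v'' _ h =>
              have hit1 : (nxt σ)^[m + 1] (GConf.dup (s, t) (some (a, s')) (some (t, Face.frown)) Rw.star) =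
                  GConf.dup (pm1, v'') (some (a, s')) (some (v'', fm)) Rw.star := by
                rw [Function.iterate_succ_apply']
                exact nxt_eq hσm
              have heq' := hit1.symm.trans heq
              injection heq' with e1 e2 e3 e4
              injection e3 with e3
              injection e3 with ev ef
              subst e1
              subst ev
              subst ef
              constructor
              · intro hfr
                subst hfr
                obtain ⟨hts, hxb, _⟩ := ihm.1 rfl
                refine ⟨hts.tail h, fun hx => ?_, Or.inr ⟨vm, hts, h, fun hx => (hxb hx).2⟩⟩
                obtain ⟨hp, _⟩ := hxb hx
                injection hp with hp1 hp2
                subst hp1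
                refine ⟨rfl, ?_⟩
                exact ⟨tauStrat L E σ, tauStrat_valid L E hv, frown_win L E hv hstepm⟩
              · intro hsm
                subst hsm
                obtain ⟨t1, t2, hg, htr2, hts2, hyb⟩ := ihm.2 rfl
                exact ⟨t1, t2, hg, htr2, hts2.tail h, hyb⟩
          | @dup3c _ _ _ _ _ _ v'' _ h hEc =>
              have hit1 : (nxt σ)^[m + 1] (GConf.dup (s, t) (some (a, s')) (some (t, Face.frown)) Rw.star) =
                  GConf.dup (pm1, pm2) (some (a, s')) (some (v'', fm)) Rw.star := by
                rw [Function.iterate_succ_apply']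
                exact nxt_eq hσm
              have heq' := hit1.symm.trans heq
              injection heq' with e1 e2 e3 e4
              injection e3 with e3
              injection e3 with ev ef
              subst e1
              subst ev
              subst ef
              constructor
              · intro hfr
                subst hfr
                rw [frown_mem_Exy] at hEc
                obtain ⟨hts, hxb, _⟩ := ihm.1 rfl
                have hxno : ¬ x = XY.b := by
                  intro hx
                  rw [hx] at hEc
                  exact XY.noConfusion hEc
                exact ⟨hts.tail h, fun hx => absurd hx hxno,
                  Or.inr ⟨vm, hts, h, fun hx => absurd hx hxno⟩⟩
              · intro hsm
                subst hsm
                obtain ⟨t1, t2, hg, htr2, hts2, hyb⟩ := ihm.2 rfl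
                exact ⟨t1, t2, hg, htr2, hts2.tail h, hyb⟩
    -- now analyse the closing move at step N
    obtain ⟨hwN, hshN⟩ := hfacts N le_rfl
    obtain ⟨pN, vN, fN, rN, heqN⟩ := hshN
    obtain ⟨pN1, pN2⟩ := pN
    have keyN := key N le_rfl (pN1, pN2) vN fN rN heqN
    have howN : GConf.dupOwned ((nxt σ)^[N] (GConf.dup (s, t) (some (a, s')) (some (t, Face.frown)) Rw.star)) := by rw [heqN]; trivial
    have hm : GMove L E Rw.check ((nxt σ)^[N] (GConf.dup (s, t) (some (a, s')) (some (t, Face.frown)) Rw.star)) (σ ((nxt σ)^[N] (GConf.dup (s, t) (some (a, s')) (some (t, Face.frown)) Rw.star))) :=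
      hv _ howN (AWin_no_stuck hwN howN)
    have hstepN : SWin L E σ (σ ((nxt σ)^[N] (GConf.dup (s, t) (some (a, s')) (some (t, Face.frown)) Rw.star))) :=
      swin_step L E hwN hm (fun _ => rfl)
    generalize hσN : σ ((nxt σ)^[N] (GConf.dup (s, t) (some (a, s')) (some (t, Face.frown)) Rw.star)) = dd at hm hclose hstepN
    rw [heqN] at hm
    cases hm with
    | dup2a h => exact absurd hclose (by exact fun hcon => Option.some_ne_none _ hcon)
    | dup2c h hEc => exact absurd hclose (by exact fun hcon => Option.some_ne_none _ hcon)
    | dup3a h => exact absurd hclose (by exact fun hcon => Option.some_ne_none _ hcon)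
    | dup3c h hEc => exact absurd hclose (by exact fun hcon => Option.some_ne_none _ hcon)
    | dup1 =>
        have hRcl : R s' vN :=
          ⟨tauStrat L E σ, tauStrat_valid L E hv, tt_win L E hv hstepN⟩
        cases fN with
        | frown =>
            obtain ⟨hts, hxb, hpred⟩ := keyN.1 rfl
            rcases hpred with hvt | ⟨w, htsw, hstw, hxw⟩
            · exact Or.inl ⟨rfl, hvt ▸ hRcl⟩
            · refine Or.inr ⟨w, vN, vN, ⟨htsw, fun hx => ⟨hR, hxw hx⟩⟩, hstw,
                ⟨Relation.ReflTransGen.refl, fun hy => ⟨hRcl, hRcl⟩⟩, hRcl⟩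
        | smile =>
            obtain ⟨t1, t2, hg, htr2, hts2, hyb⟩ := keyN.2 rfl
            exact Or.inr ⟨t1, t2, vN, hg, htr2,
              ⟨hts2, fun hy => ⟨hyb hy, hRcl⟩⟩, hRcl⟩
    | @dup2b _ _ _ _ _ v'' _ h =>
        have hRcl : R s' v'' :=
          ⟨tauStrat L E σ, tauStrat_valid L E hv, tt_win L E hv hstepN⟩
        obtain ⟨hts, hxb, _⟩ := keyN.1 rfl
        exact Or.inr ⟨vN, v'', v'', ⟨hts, fun hx => ⟨hR, (hxb hx).2⟩⟩, h,
          ⟨Relation.ReflTransGen.refl, fun hy => ⟨hRcl, hRcl⟩⟩, hRcl⟩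
    | @dup3b _ _ _ _ _ v'' _ h =>
        have hRcl : R s' v'' :=
          ⟨tauStrat L E σ, tauStrat_valid L E hv, tt_win L E hv hstepN⟩
        obtain ⟨t1, t2, hg, htr2, hts2, hyb⟩ := keyN.2 rfl
        exact Or.inr ⟨t1, t2, v'', hg, htr2,
          ⟨hts2.tail h, fun hy => ⟨hyb hy, hRcl⟩⟩, hRcl⟩

end GamesBisim
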